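/- arXiv:1603.03639 — 2 statements merged into one kernel-verified Lean document; each statement's English description precedes it below -/
import Mathlib

section
/- Let $u, v, \tilde v \in \mathbb{C}$ with $|u| < 1$, and let $M = \begin{pmatrix} u & v \\ \tilde v & \tilde v v/(1+u)\end{pmatrix}$. Then $I_2 - M M^*$ is positive definite if and only if $|u|^2 + |v|^2 + |\tilde v|^2 < 1$. -/
/-!
A Hermitian `2 × 2` matrix is positive definite iff its `(0,0)` entry and its determinant are
positive, by completing the square in the quadratic form. For `A = I - MM*` the `(0,0)` entry
is `1 - |u|² - |v|²` and `det A = 1 - ‖M‖²_F + |det M|²`. The Mok matrix is built so that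
`det M = -M₁₁`, hence the determinant is `1 - |u|² - |v|² - |ṽ|²`, whose positivity
already forces that of the `(0,0)` entry.
-/

open Matrix
open scoped ComplexOrder

namespace Matrix

variable {𝕜 : Type*} [RCLike 𝕜]

lemma IsHermitian.apply_zero_zero_mul_dotProduct_mulVec_fin_two {A : Matrix (Fin 2) (Fin 2) 𝕜}
    (hA : A.IsHermitian) (x : Fin 2 → 𝕜) :
    A 0 0 * (star x ⬝ᵥ A *ᵥ x) =
      star (A 0 0 * x 0 + A 0 1 * x 1) * (A 0 0 * x 0 + A 0 1 * x 1) +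
        A.det * (star (x 1) * x 1) := by
  have h00 : star (A 0 0) = A 0 0 := hA.apply 0 0
  have h10 : star (A 0 1) = A 1 0 := hA.apply 1 0
  simp only [dotProduct, mulVec, Fin.sum_univ_two, Pi.star_apply, det_fin_two, star_add, star_mul',
    h00, h10]
  ring

lemma IsHermitian.posDef_fin_two_iff {A : Matrix (Fin 2) (Fin 2) 𝕜} (hA : A.IsHermitian) :
    A.PosDef ↔ 0 < A 0 0 ∧ 0 < A.det := by
  refine ⟨fun h ↦ ⟨h.diag_pos, h.det_pos⟩, fun ⟨h00, hdet⟩ ↦ ?_⟩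
  refine PosDef.of_dotProduct_mulVec_pos hA fun x hx ↦ pos_of_mul_pos_right ?_ h00.le
  rw [hA.apply_zero_zero_mul_dotProduct_mulVec_fin_two]
  by_cases hx1 : x 1 = 0
  · have hx0 : x 0 ≠ 0 := fun hx0 ↦ hx (funext fun i ↦ by fin_cases i <;> assumption)
    simpa [hx1] using star_mul_self_pos (.of_ne_zero (mul_ne_zero h00.ne' hx0))
  · exact add_pos_of_nonneg_of_pos (star_mul_self_nonneg _)
      (mul_pos hdet (star_mul_self_pos (.of_ne_zero hx1)))

lemma one_sub_mul_conjTranspose_apply_zero_zero_fin_two (M : Matrix (Fin 2) (Fin 2) 𝕜) :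
    (1 - M * Mᴴ) 0 0 = ((1 - (‖M 0 0‖ ^ 2 + ‖M 0 1‖ ^ 2) : ℝ) : 𝕜) := by
  push_cast
  simp only [sub_apply, one_apply_eq, mul_apply, Fin.sum_univ_two, conjTranspose_apply,
    RCLike.star_def, RCLike.mul_conj]

lemma det_one_sub_mul_conjTranspose_fin_two (M : Matrix (Fin 2) (Fin 2) 𝕜) :
    (1 - M * Mᴴ).det = ((1 - (‖M 0 0‖ ^ 2 + ‖M 0 1‖ ^ 2 + ‖M 1 0‖ ^ 2 + ‖M 1 1‖ ^ 2) +
      ‖M.det‖ ^ 2 : ℝ) : 𝕜) := by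
  push_cast
  simp only [← RCLike.mul_conj, det_fin_two, sub_apply, one_apply_eq,
    one_apply_ne zero_ne_one, one_apply_ne one_ne_zero, mul_apply, Fin.sum_univ_two,
    conjTranspose_apply, RCLike.star_def, map_sub, map_mul]
  ring

end Matrix

variable {K : Type*} [Field K]

def mokMatrix (u v tv : K) : Matrix (Fin 2) (Fin 2) K := !![u, v; tv, tv * v / (1 + u)]

lemma det_mokMatrix (u v tv : K) (hu : 1 + u ≠ 0) :
    (mokMatrix u v tv).det = -mokMatrix u v tv 1 1 := by
  simp only [mokMatrix, det_fin_two_of, of_apply, cons_val', cons_val_one, cons_val_fin_one]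
  field_simp
  ring

theorem mok_embedding_range (u v tv : ℂ) (hu : ‖u‖ < 1) :
    (1 - (!![u, v; tv, tv * v / (1 + u)]) * (!![u, v; tv, tv * v / (1 + u)])ᴴ).PosDef
      ↔ ‖u‖ ^ 2 + ‖v‖ ^ 2 + ‖tv‖ ^ 2 < 1 := by
  have h1u : 1 + u ≠ 0 := fun h ↦ by simp [eq_neg_of_add_eq_zero_right h] at hu
  change (1 - mokMatrix u v tv * (mokMatrix u v tv)ᴴ).PosDef ↔ _
  rw [(isHermitian_one.sub (isHermitian_mul_conjTranspose_self _)).posDef_fin_two_iff,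
    one_sub_mul_conjTranspose_apply_zero_zero_fin_two, det_one_sub_mul_conjTranspose_fin_two,
    det_mokMatrix u v tv h1u, norm_neg, RCLike.ofReal_pos, RCLike.ofReal_pos]
  simp only [mokMatrix, of_apply, cons_val', cons_val_zero, cons_val_one, cons_val_fin_one]
  have htv := sq_nonneg ‖tv‖
  exact ⟨fun h ↦ by linarith [h.2], fun h ↦ ⟨by linarith, by linarith⟩⟩
end

section
/- Define $F : \mathbb{C} \to \mathbb{C}^{2\times 2}$ by $F(z) = \begin{pmatrix} 0 & z/\sqrt{2} \\ z/\sqrt{2} & z^2/2 \end{pmatrix}$. Then for all $z, w \in \mathbb{C}$, $\det\big(I_2 - F(z) F(w)^*\big) = 1 - z\bar{w}$. -/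
open Matrix ComplexConjugate

/-
For a `2 × 2` matrix, `det (1 - M) = 1 - tr M + det M`. With `M = F z * (F w)ᴴ` one has
`tr M = z w̄ + (z w̄)² / 4` and `det M = det (F z) * conj (det (F w)) = (z w̄)² / 4`,
so the quadratic terms cancel.
-/

theorem Matrix.det_one_sub_fin_two {R : Type*} [CommRing R] (M : Matrix (Fin 2) (Fin 2) R) :
    (1 - M).det = 1 - M.trace + M.det := by
  simp only [det_fin_two, trace_fin_two, sub_apply, one_apply_eq,
    one_apply_ne (zero_ne_one (α := Fin 2)), one_apply_ne (one_ne_zero (α := Fin 2))]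
  ring

theorem Matrix.trace_mul_conjTranspose {m n R : Type*} [Fintype m] [Fintype n]
    [NonUnitalSemiring R] [StarRing R] (A B : Matrix m n R) :
    (A * Bᴴ).trace = ∑ i, ∑ j, A i j * star (B i j) := by
  simp only [trace, diag_apply, mul_apply, conjTranspose_apply]

theorem div_sqrt_two_mul_div_sqrt_two (z w : ℂ) :
    z / Real.sqrt 2 * (w / Real.sqrt 2) = z * w / 2 := by
  rw [div_mul_div_comm, ← Complex.ofReal_mul, Real.mul_self_sqrt zero_le_two, Complex.ofReal_ofNat]

noncomputable def discIsometry (z : ℂ) : Matrix (Fin 2) (Fin 2) ℂ :=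
  !![0, z / Real.sqrt 2; z / Real.sqrt 2, z ^ 2 / 2]

theorem det_discIsometry (z : ℂ) : (discIsometry z).det = -(z ^ 2 / 2) := by
  rw [discIsometry, det_fin_two_of, div_sqrt_two_mul_div_sqrt_two]
  ring

theorem trace_discIsometry_mul_conjTranspose (z w : ℂ) :
    (discIsometry z * (discIsometry w)ᴴ).trace = z * conj w + (z * conj w) ^ 2 / 4 := by
  simp only [trace_mul_conjTranspose, Fin.sum_univ_two, discIsometry, of_apply, cons_val',
    cons_val_zero, cons_val_one, empty_val', cons_val_fin_one, Complex.star_def, map_zero,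
    mul_zero, map_div₀, map_pow, map_ofNat, Complex.conj_ofReal, div_sqrt_two_mul_div_sqrt_two]
  ring

theorem nonstandard_isometry_disc (z w : ℂ) :
    (1 - (!![0, z / Real.sqrt 2; z / Real.sqrt 2, z ^ 2 / 2]) *
        (!![0, w / Real.sqrt 2; w / Real.sqrt 2, w ^ 2 / 2])ᴴ).det
      = 1 - z * conj w := by
  change (1 - discIsometry z * (discIsometry w)ᴴ).det = _
  rw [det_one_sub_fin_two, trace_discIsometry_mul_conjTranspose, det_mul, det_conjTranspose,
    det_discIsometry, det_discIsometry]
  simp only [star_neg, star_div₀, star_pow, Complex.star_def, map_ofNat]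
  ring
end
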